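/- Let a : ℝⁿ → ℂ be supported in the ellipsoid B₀ (with |B₀| = 1), belong to L^q for some 1 ≤ q ≤ ∞, and satisfy ∫ a(x) x^β dx = 0 for all multi-indices |β| ≤ s. Then for every multi-index α with |α| ≤ s and every ξ ∈ ℝⁿ, |∂^α (𝓕 a)(ξ)| ≤ C ‖a‖_q · min{1, |ξ|^{s−|α|+1}}, where C depends only on s, n, and B₀. -/

import Mathlib

/-! Differentiating under the integral, `∂^α 𝓕a(ξ)` is `(2π)^|α|` times the Fourier transform of
`G(x) = x^α a(x)`, which is supported in a ball `B(0, R) ⊇ B₀` and, by the vanishing moments of `a`,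
is orthogonal to every polynomial of degree `≤ s - |α|`. One may therefore subtract from
`e^{-2πi⟨x,ξ⟩}` its Taylor polynomial of degree `s - |α|`, whose error is `≤ 2 (2πR|ξ|)^{s-|α|+1}`
as long as `2πR|ξ| ≤ 1`; for larger `ξ` the trivial bound `|𝓕G| ≤ ‖G‖₁` suffices. Finally
`‖G‖₁ ≤ R^|α| ‖a‖₁ ≤ R^|α| ‖a‖_q`, by Hölder on the set `B₀` of measure one. -/

open MeasureTheory Complex Finset Metric
open scoped FourierTransform ENNReal Real RealInnerProductSpace

theorem Complex.norm_exp_sub_sum_range_succ_le {z : ℂ} (hz : ‖z‖ ≤ 1) (d : ℕ) :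
    ‖exp z - ∑ j ∈ range (d + 1), z ^ j / j.factorial‖ ≤ 2 * ‖z‖ ^ (d + 1) := by
  have hz' : ‖z‖ / (d + 1).succ ≤ 1 / 2 := by
    rw [div_le_iff₀ (by positivity)]; push_cast; linarith
  calc _ ≤ ‖z‖ ^ (d + 1) / (d + 1).factorial * 2 := exp_bound' hz'
    _ ≤ 2 * ‖z‖ ^ (d + 1) := by
      rw [mul_comm]; gcongr; exact div_le_self (by positivity) (mod_cast (d + 1).factorial_pos)

section LpOnSetOfMeasureOne

variable {α E : Type*} [MeasurableSpace α] [NormedAddCommGroup E] {μ : Measure α} {s : Set α}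
  {f : α → E} {q : ℝ≥0∞}

theorem MeasureTheory.eLpNorm_le_eLpNorm_of_support_subset_of_measure_eq_one
    {p : ℝ≥0∞} (hpq : p ≤ q) (hs : μ s = 1) (hsupp : f.support ⊆ s)
    (hf : AEStronglyMeasurable f μ) : eLpNorm f p μ ≤ eLpNorm f q μ := by
  have : IsProbabilityMeasure (μ.restrict s) := ⟨by simp [hs]⟩
  rw [← eLpNorm_restrict_eq_of_support_subset hsupp,
    ← eLpNorm_restrict_eq_of_support_subset (p := q) hsupp]
  exact eLpNorm_le_eLpNorm_of_exponent_le hpq hf.restrict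

theorem MeasureTheory.MemLp.integrable_of_support_subset_of_measure_eq_one
    (hf : MemLp f q μ) (hq : 1 ≤ q) (hs : μ s = 1) (hsupp : f.support ⊆ s) : Integrable f μ :=
  memLp_one_iff_integrable.1
    ⟨hf.1, (eLpNorm_le_eLpNorm_of_support_subset_of_measure_eq_one hq hs hsupp hf.1).trans_lt hf.2⟩

theorem MeasureTheory.MemLp.integral_norm_le_of_support_subset_of_measure_eq_one
    (hf : MemLp f q μ) (hq : 1 ≤ q) (hs : μ s = 1) (hsupp : f.support ⊆ s) :
    ∫ x, ‖f x‖ ∂μ ≤ (eLpNorm f q μ).toReal := by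
  rw [integral_norm_eq_lintegral_enorm hf.1, ← eLpNorm_one_eq_lintegral_enorm]
  exact ENNReal.toReal_mono hf.eLpNorm_ne_top
    (eLpNorm_le_eLpNorm_of_support_subset_of_measure_eq_one hq hs hsupp hf.1)

end LpOnSetOfMeasureOne

section CompactSupport

variable {X R : Type*} [TopologicalSpace X] [T2Space X] [MeasurableSpace X]
  [OpensMeasurableSpace X] [NormedRing R] [SecondCountableTopologyEither X R] {μ : Measure X}

theorem MeasureTheory.Integrable.continuous_mul_of_hasCompactSupport {f g : X → R}
    (hf : Integrable f μ) (hfc : HasCompactSupport f) (hg : Continuous g) :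
    Integrable (fun x => g x * f x) μ :=
  (integrableOn_iff_integrable_of_support_subset
    ((Function.support_mul_subset_right _ _).trans (subset_tsupport f))).1
    (hf.integrableOn.continuousOn_mul hg.continuousOn hfc)

end CompactSupport

section InnerProductSpace

variable {V : Type*} [NormedAddCommGroup V] [InnerProductSpace ℝ V]

theorem norm_exp_inner_sub_taylor_le {x ξ : V} {R : ℝ} (hx : ‖x‖ ≤ R) (hξ : 2 * π * R * ‖ξ‖ ≤ 1)
    (d : ℕ) :
    ‖exp (↑(-2 * π * ⟪x, ξ⟫) * I) -
        ∑ j ∈ range (d + 1), (-2 * π * I) ^ j / j.factorial * (⟪x, ξ⟫ : ℂ) ^ j‖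
      ≤ 2 * (2 * π * R * ‖ξ‖) ^ (d + 1) := by
  set z : ℂ := ↑(-2 * π * ⟪x, ξ⟫) * I
  have hz : ‖z‖ ≤ 2 * π * R * ‖ξ‖ := by
    have : |⟪x, ξ⟫| ≤ R * ‖ξ‖ :=
      (abs_real_inner_le_norm x ξ).trans (mul_le_mul_of_nonneg_right hx (norm_nonneg ξ))
    simp only [z, norm_mul, norm_I, mul_one, norm_real, Real.norm_eq_abs, abs_neg,
      abs_two, abs_of_pos Real.pi_pos]
    nlinarith [Real.pi_pos]
  have hterm : ∀ j, (-2 * π * I) ^ j / j.factorial * (⟪x, ξ⟫ : ℂ) ^ j = z ^ j / j.factorial :=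
    fun j => by simp only [z]; push_cast; ring
  simp_rw [hterm]
  calc _ ≤ 2 * ‖z‖ ^ (d + 1) := norm_exp_sub_sum_range_succ_le (hz.trans hξ) d
    _ ≤ 2 * (2 * π * R * ‖ξ‖) ^ (d + 1) := by gcongr

variable [FiniteDimensional ℝ V] [MeasurableSpace V] [BorelSpace V]

theorem norm_fourier_le_of_integral_inner_pow_mul_eq_zero {G : V → ℂ} {R : ℝ} {ξ : V} {d : ℕ}
    (hG : Integrable G) (hsupp : G.support ⊆ closedBall 0 R)
    (hmom : ∀ j ≤ d, ∫ x, (⟪x, ξ⟫ : ℂ) ^ j * G x = 0) (hξ : 2 * π * R * ‖ξ‖ ≤ 1) :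
    ‖𝓕 G ξ‖ ≤ 2 * (2 * π * R * ‖ξ‖) ^ (d + 1) * ∫ x, ‖G x‖ := by
  have hGc : HasCompactSupport G :=
    .intro (isCompact_closedBall 0 R) (Function.support_subset_iff'.1 hsupp)
  set T : V → ℂ := fun x => ∑ j ∈ range (d + 1), (-2 * π * I) ^ j / j.factorial * (⟪x, ξ⟫ : ℂ) ^ j
  have hTG : ∫ x, T x * G x = 0 := by
    simp_rw [T, sum_mul, mul_assoc]
    rw [integral_finsetSum _ fun j _ =>
      (hG.continuous_mul_of_hasCompactSupport hGc (by fun_prop)).const_mul _]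
    refine sum_eq_zero fun j hj => ?_
    rw [integral_const_mul, hmom j (Nat.lt_succ_iff.1 (mem_range.1 hj)), mul_zero]
  have hbound : ∀ x, ‖(exp (↑(-2 * π * ⟪x, ξ⟫) * I) - T x) * G x‖
      ≤ 2 * (2 * π * R * ‖ξ‖) ^ (d + 1) * ‖G x‖ := by
    intro x
    by_cases hx : x ∈ closedBall 0 R
    · rw [norm_mul]
      gcongr
      exact norm_exp_inner_sub_taylor_le (mem_closedBall_zero_iff.1 hx) hξ d
    · simp [Function.support_subset_iff'.1 hsupp x hx]
  calc ‖𝓕 G ξ‖ = ‖∫ x, (exp (↑(-2 * π * ⟪x, ξ⟫) * I) - T x) * G x‖ := by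
        simp_rw [Real.fourier_eq', smul_eq_mul, sub_mul]
        rw [integral_sub (hG.continuous_mul_of_hasCompactSupport hGc (by fun_prop))
          (hG.continuous_mul_of_hasCompactSupport hGc (by fun_prop)), hTG, sub_zero]
    _ ≤ ∫ x, 2 * (2 * π * R * ‖ξ‖) ^ (d + 1) * ‖G x‖ :=
        norm_integral_le_of_norm_le (hG.norm.const_mul _) (ae_of_all _ hbound)
    _ = 2 * (2 * π * R * ‖ξ‖) ^ (d + 1) * ∫ x, ‖G x‖ := integral_const_mul _ _

theorem norm_fourier_le_mul_min_of_integral_inner_pow_mul_eq_zero {G : V → ℂ} {R : ℝ} {ξ : V}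
    {d : ℕ} (hR : 1 ≤ 2 * π * R) (hG : Integrable G) (hsupp : G.support ⊆ closedBall 0 R)
    (hmom : ∀ j ≤ d, ∫ x, (⟪x, ξ⟫ : ℂ) ^ j * G x = 0) :
    ‖𝓕 G ξ‖ ≤ 2 * (2 * π * R) ^ (d + 1) * min 1 (‖ξ‖ ^ (d + 1)) * ∫ x, ‖G x‖ := by
  rcases le_or_gt (2 * π * R * ‖ξ‖) 1 with hξ | hξ
  · have hξ1 : ‖ξ‖ ≤ 1 := by nlinarith [norm_nonneg ξ]
    rw [min_eq_right (pow_le_one₀ (norm_nonneg ξ) hξ1)]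
    calc _ ≤ 2 * (2 * π * R * ‖ξ‖) ^ (d + 1) * ∫ x, ‖G x‖ :=
          norm_fourier_le_of_integral_inner_pow_mul_eq_zero hG hsupp hmom hξ
      _ = _ := by ring
  · have hmin : 1 ≤ (2 * π * R) ^ (d + 1) * min 1 (‖ξ‖ ^ (d + 1)) := by
      rw [mul_min_of_nonneg _ _ (by positivity), mul_one, ← mul_pow]
      exact le_min (one_le_pow₀ hR) (one_le_pow₀ hξ.le)
    calc ‖𝓕 G ξ‖ ≤ ∫ x, ‖G x‖ := VectorFourier.norm_fourierIntegral_le_integral_norm _ _ _ _ _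
      _ ≤ _ := le_mul_of_one_le_left (integral_nonneg fun _ => norm_nonneg _) (by linarith)

theorem Real.iteratedFDeriv_fourier_apply {E : Type*} [NormedAddCommGroup E] [NormedSpace ℂ E]
    {f : V → E} {k : ℕ} (hf : ∀ j ≤ k, Integrable (fun v => ‖v‖ ^ j * ‖f v‖))
    (h'f : AEStronglyMeasurable f) (ξ : V) (y : Fin k → V) :
    iteratedFDeriv ℝ k (𝓕 f) ξ y =
      (-(2 * π * I)) ^ k • 𝓕 (fun x => (∏ i, ⟪x, y i⟫) • f x) ξ := by
  have hf' : ∀ j : ℕ, (j : ℕ∞) ≤ k → Integrable (fun v => ‖v‖ ^ j * ‖f v‖) :=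
    fun j hj => hf j (mod_cast hj)
  rw [Real.iteratedFDeriv_fourier hf' h'f le_rfl, Real.fourier_continuousMultilinearMap_apply
    (VectorFourier.integrable_fourierPowSMulRight _ (hf k le_rfl) h'f)]
  simp only [VectorFourier.fourierPowSMulRight_apply, Real.fourier_eq,
    smul_comm _ ((-(2 * π * I)) ^ k), integral_smul]
  rfl

end InnerProductSpace

namespace EuclideanSpace

variable {ι : Type*} [Fintype ι]

theorem norm_prod_coord_le {k : ℕ} (x : EuclideanSpace ℝ ι) (m : Fin k → ι) :
    ‖∏ i, (x (m i) : ℂ)‖ ≤ ‖x‖ ^ k := by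
  rw [norm_prod]
  calc ∏ i, ‖(x (m i) : ℂ)‖ ≤ ∏ _i : Fin k, ‖x‖ :=
        prod_le_prod (fun _ _ => norm_nonneg _) fun i _ => by
          rw [norm_real]; exact PiLp.norm_apply_le x (m i)
    _ = ‖x‖ ^ k := by simp

theorem integral_norm_prod_coord_mul_le {a : EuclideanSpace ℝ ι → ℂ} {R : ℝ} {k : ℕ}
    (m : Fin k → ι) (ha : Integrable a) (hsupp : a.support ⊆ closedBall 0 R) :
    ∫ x, ‖(∏ i, (x (m i) : ℂ)) * a x‖ ≤ R ^ k * ∫ x, ‖a x‖ := by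
  rw [← integral_const_mul]
  refine integral_mono_of_nonneg (ae_of_all _ fun _ => norm_nonneg _)
    (ha.norm.const_mul _) (ae_of_all _ fun x => ?_)
  dsimp only
  by_cases hx : x ∈ closedBall 0 R
  · rw [norm_mul]
    gcongr
    exact (norm_prod_coord_le x m).trans
      (pow_le_pow_left₀ (norm_nonneg x) (mem_closedBall_zero_iff.1 hx) k)
  · simp [Function.support_subset_iff'.1 hsupp x hx]

theorem norm_iteratedFDeriv_fourier_single [DecidableEq ι] {a : EuclideanSpace ℝ ι → ℂ}
    (ha : Integrable a) (hac : HasCompactSupport a) {k : ℕ} (m : Fin k → ι)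
    (ξ : EuclideanSpace ℝ ι) :
    ‖iteratedFDeriv ℝ k (𝓕 a) ξ (fun i => single (m i) 1)‖ =
      (2 * π) ^ k * ‖𝓕 (fun x => (∏ i, (x (m i) : ℂ)) * a x) ξ‖ := by
  rw [Real.iteratedFDeriv_fourier_apply (fun j _ =>
    ha.norm.continuous_mul_of_hasCompactSupport hac.norm (by fun_prop)) ha.1]
  simp [inner_single_right, abs_of_pos Real.pi_pos]

variable {s : ℕ} {a : EuclideanSpace ℝ ι → ℂ}

theorem integral_mul_prod_coord_eq_zero
    (hmom : ∀ β : ι → ℕ, ∑ i, β i ≤ s → ∫ x, a x * ∏ i, (x i : ℂ) ^ β i = 0)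
    {κ : Type*} [Fintype κ] (p : κ → ι) (hp : Fintype.card κ ≤ s) :
    ∫ x, a x * ∏ t, (x (p t) : ℂ) = 0 := by
  classical
  have hprod : ∀ x : EuclideanSpace ℝ ι,
      ∏ t, (x (p t) : ℂ) = ∏ i, (x i : ℂ) ^ #{t | p t = i} := by
    intro x
    rw [← prod_fiberwise univ p]
    refine prod_congr rfl fun i _ => ?_
    rw [prod_congr rfl fun t ht => by rw [(mem_filter.1 ht).2], prod_const]
  simp_rw [hprod]
  refine hmom _ ?_
  rw [← card_eq_sum_card_fiberwise fun t _ => mem_univ (p t)]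
  exact hp

theorem integral_inner_pow_mul_prod_coord_mul_eq_zero
    (hmom : ∀ β : ι → ℕ, ∑ i, β i ≤ s → ∫ x, a x * ∏ i, (x i : ℂ) ^ β i = 0)
    (ha : Integrable a) (hac : HasCompactSupport a) {j k : ℕ} (hjk : j + k ≤ s)
    (m : Fin k → ι) (ξ : EuclideanSpace ℝ ι) :
    ∫ x, (⟪x, ξ⟫ : ℂ) ^ j * ((∏ i, (x (m i) : ℂ)) * a x) = 0 := by
  have hexpand : ∀ x : EuclideanSpace ℝ ι,
      (⟪x, ξ⟫ : ℂ) ^ j * ((∏ i, (x (m i) : ℂ)) * a x) =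
        ∑ p : Fin j → ι, (∏ t, (ξ (p t) : ℂ)) * (a x * ∏ r, (x (Sum.elim p m r) : ℂ)) := by
    intro x
    rw [PiLp.inner_apply]
    simp only [RCLike.inner_apply, conj_trivial, ofReal_sum, ofReal_mul, Fintype.sum_pow, sum_mul]
    refine sum_congr rfl fun p _ => ?_
    rw [Fintype.prod_sum_type]
    simp only [Sum.elim_inl, Sum.elim_inr, prod_mul_distrib]
    ring
  have hint (p : Fin j → ι) : Integrable fun x : EuclideanSpace ℝ ι =>
      (∏ t, (ξ (p t) : ℂ)) * (a x * ∏ r, (x (Sum.elim p m r) : ℂ)) := by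
    refine Integrable.const_mul ?_ _
    simp_rw [mul_comm (a _)]
    exact ha.continuous_mul_of_hasCompactSupport hac (by fun_prop)
  simp_rw [hexpand]
  rw [integral_finsetSum _ fun p _ => hint p]
  refine sum_eq_zero fun p _ => ?_
  rw [integral_const_mul, integral_mul_prod_coord_eq_zero hmom _ (by simpa using hjk), mul_zero]

end EuclideanSpace

theorem fourier_deriv_bound_of_atom_on_B0_general
    {n : ℕ} (s : ℕ) (B0 : Set (EuclideanSpace ℝ (Fin n)))
    (hB0bdd : Bornology.IsBounded B0)
    (hB0vol : volume B0 = 1) :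
    ∃ C > 0, ∀ (q : ℝ≥0∞), 1 ≤ q → ∀ (a : EuclideanSpace ℝ (Fin n) → ℂ),
      MemLp a q volume →
      Function.support a ⊆ B0 →
      (∀ β : Fin n → ℕ, (∑ i, β i) ≤ s →
        ∫ x, a x * ∏ i, (x i : ℂ) ^ β i = 0) →
      ∀ (k : ℕ), k ≤ s → ∀ (m : Fin k → Fin n) (ξ : EuclideanSpace ℝ (Fin n)),
        ‖iteratedFDeriv ℝ k (𝓕 a) ξ (fun i => EuclideanSpace.single (m i) 1)‖
          ≤ C * (eLpNorm a q volume).toReal * min 1 (‖ξ‖ ^ (s - k + 1)) := by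
  obtain ⟨R, hR, hB0R⟩ : ∃ R : ℝ, 1 ≤ 2 * π * R ∧ B0 ⊆ closedBall 0 R := by
    obtain ⟨r, hr⟩ := hB0bdd.subset_closedBall 0
    refine ⟨max r 1, ?_, hr.trans (closedBall_subset_closedBall (le_max_left _ _))⟩
    nlinarith [le_max_right r 1, Real.pi_gt_three]
  refine ⟨2 * (2 * π * R) ^ (s + 1), by positivity, ?_⟩
  intro q hq a ha hsupp hmom k hk m ξ
  have haR : a.support ⊆ closedBall 0 R := hsupp.trans hB0R
  have hac : HasCompactSupport a :=
    .intro (isCompact_closedBall 0 R) (Function.support_subset_iff'.1 haR)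
  have hai := ha.integrable_of_support_subset_of_measure_eq_one hq hB0vol hsupp
  have hF := norm_fourier_le_mul_min_of_integral_inner_pow_mul_eq_zero (d := s - k) hR
    (hai.continuous_mul_of_hasCompactSupport hac (by fun_prop))
    ((Function.support_mul_subset_right _ _).trans haR)
    fun j _ => EuclideanSpace.integral_inner_pow_mul_prod_coord_mul_eq_zero hmom hai hac
      (by omega) m ξ
  have hpow : (2 * π * R) ^ (s + 1) = (2 * π) ^ k * R ^ k * (2 * π * R) ^ (s - k + 1) := by
    rw [← mul_pow, ← pow_add]; congr 1; omega
  have hR0 : 0 ≤ R := by nlinarith [Real.pi_pos]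
  have haL1 := ha.integral_norm_le_of_support_subset_of_measure_eq_one hq hB0vol hsupp
  have hGL1 := EuclideanSpace.integral_norm_prod_coord_mul_le m hai haR
  rw [EuclideanSpace.norm_iteratedFDeriv_fourier_single hai hac, hpow]
  calc _ ≤ (2 * π) ^ k * (2 * (2 * π * R) ^ (s - k + 1) * min 1 (‖ξ‖ ^ (s - k + 1)) *
          (R ^ k * (eLpNorm a q volume).toReal)) := by
        gcongr
        exact hF.trans (by gcongr; exact hGL1.trans (by gcongr))
    _ = _ := by ring

/-- if `a` is supported in a fixed bounded convex set `B₀` of measure 1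
containing `0`, lies in `L^q` (`1 ≤ q ≤ ∞`), and has vanishing moments up to order `s`,
then for every multi-index `α` with `|α| ≤ s` (encoded by `m : Fin k → Fin n`, `k ≤ s`)
`|∂^α (𝓕 a)(ξ)| ≤ C ‖a‖_q min{1, |ξ|^{s-|α|+1}}`, with `C = C(s, n, B₀)`. -/
theorem fourier_deriv_bound_of_atom_on_B0
    {n : ℕ} (s : ℕ) (B0 : Set (EuclideanSpace ℝ (Fin n)))
    (hB0bdd : Bornology.IsBounded B0) (hB0conv : Convex ℝ B0)
    (hB0mem : (0 : EuclideanSpace ℝ (Fin n)) ∈ B0)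
    (hB0vol : volume B0 = 1) :
    ∃ C > 0, ∀ (q : ℝ≥0∞), 1 ≤ q → ∀ (a : EuclideanSpace ℝ (Fin n) → ℂ),
      MemLp a q volume →
      Function.support a ⊆ B0 →
      (∀ β : Fin n → ℕ, (∑ i, β i) ≤ s →
        ∫ x, a x * ∏ i, (x i : ℂ) ^ β i = 0) →
      ∀ (k : ℕ), k ≤ s → ∀ (m : Fin k → Fin n) (ξ : EuclideanSpace ℝ (Fin n)),
        ‖iteratedFDeriv ℝ k (𝓕 a) ξ (fun i => EuclideanSpace.single (m i) 1)‖
          ≤ C * (eLpNorm a q volume).toReal * min 1 (‖ξ‖ ^ (s - k + 1)) :=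
  fourier_deriv_bound_of_atom_on_B0_general s B0 hB0bdd hB0vol
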